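/- Let R be a ring and X an R-module. Suppose V and W are submodules of X with direct sum decompositions into simple submodules V = V₁ ⊕ ⋯ ⊕ V_a and W = W₁ ⊕ ⋯ ⊕ W_b, and suppose V ∩ W is a direct summand of W as an R-module. Let I = { i ∈ {1,…,a} : ∃ j, V_i ≅ W_j as R-modules }. Then V ∩ W ⊆ ⊕_{i ∈ I} V_i. -/

import Mathlib

/-!
`V ⊓ W` lies in the semisimple module `W`, so it is the sum of its simple submodules and it
suffices to treat a simple `S ≤ V ⊓ W`. Since `S ≤ ⨆ j, W j`, it is isomorphic to some `W j`.
Since `S ≤ ⨆ i, V i`, and the `S`-isotypic component contains `S` and every `V i ≅ S` but meets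
the sum of the other `V i` trivially, the modular law puts `S` inside the sum of the `V i ≅ S`.
-/

namespace Submodule

variable {R M : Type*} [Ring R] [AddCommGroup M] [Module R M]

theorem sSup_simples_le (N : Submodule R M) [IsSemisimpleModule R N] :
    sSup {m : Submodule R M | IsSimpleModule R m ∧ m ≤ N} = N := by
  refine le_antisymm (sSup_le fun _ h ↦ h.2) ?_
  calc N = (sSup {m : Submodule R N | IsSimpleModule R m}).map N.subtype := by
        rw [IsSemisimpleModule.sSup_simples_eq_top, map_top, range_subtype]
    _ = ⨆ m ∈ {m : Submodule R N | IsSimpleModule R m}, m.map N.subtype :=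
        (gc_map_comap _).l_sSup
    _ ≤ sSup {m : Submodule R M | IsSimpleModule R m ∧ m ≤ N} :=
        iSup₂_le fun m (_ : IsSimpleModule R m) ↦ le_sSup
          ⟨.congr (m.equivMapOfInjective _ N.subtype_injective).symm, N.map_subtype_le m⟩

variable {ι : Type*} (S : Submodule R M) [IsSimpleModule R S]
  (A : ι → Submodule R M) [∀ i, IsSimpleModule R (A i)]

theorem disjoint_isotypicComponent_iSup_not_linearEquiv :
    Disjoint (isotypicComponent R M S) (⨆ (i) (_ : ¬Nonempty (S ≃ₗ[R] A i)), A i) := by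
  refine (sSupIndep_isotypicComponents R M ⟨S, ‹_›, rfl⟩).mono_right (iSup₂_le fun i hi ↦ ?_)
  refine (A i).le_isotypicComponent.trans (le_sSup ⟨⟨A i, inferInstance, rfl⟩, fun h ↦ hi ?_⟩)
  have ⟨e⟩ := isIsotypicOfType_submodule_iff.mp (.isotypicComponent R M S) (A i)
    (h ▸ (A i).le_isotypicComponent)
  exact ⟨e.symm⟩

theorem le_iSup_linearEquiv_of_le_iSup (h : S ≤ ⨆ i, A i) :
    S ≤ ⨆ (i) (_ : Nonempty (S ≃ₗ[R] A i)), A i := by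
  have hle_isotypic : ⨆ (i) (_ : Nonempty (S ≃ₗ[R] A i)), A i ≤ isotypicComponent R M S :=
    iSup₂_le fun i ⟨e⟩ ↦ le_sSup ⟨e.symm⟩
  rw [iSup_split _ fun i ↦ Nonempty (S ≃ₗ[R] A i)] at h
  calc S ≤ _ ⊓ isotypicComponent R M S := le_inf h S.le_isotypicComponent
    _ = _ := by
      rw [sup_inf_assoc_of_le _ hle_isotypic,
        (disjoint_isotypicComponent_iSup_not_linearEquiv S A).symm.eq_bot, sup_bot_eq]

theorem exists_linearEquiv_of_le_iSup (h : S ≤ ⨆ i, A i) : ∃ i, Nonempty (S ≃ₗ[R] A i) := by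
  by_contra! hne
  have hS := S.le_iSup_linearEquiv_of_le_iSup A h
  simp only [not_nonempty_iff.mpr (hne _), iSup_false, iSup_bot, le_bot_iff] at hS
  exact (isSimpleModule_iff_isAtom.mp ‹_›).1 hS

end Submodule

theorem inf_le_iso_summands_general
    (R : Type*) [Ring R] (X : Type*) [AddCommGroup X] [Module R X]
    (V W : Submodule R X) (a b : ℕ)
    (Vf : Fin a → Submodule R X) (Wf : Fin b → Submodule R X)
    (hVsimple : ∀ i, IsSimpleModule R (Vf i))
    (hWsimple : ∀ j, IsSimpleModule R (Wf j))
    (hV : V = ⨆ i, Vf i) (hW : W = ⨆ j, Wf j) :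
    V ⊓ W ≤ ⨆ i ∈ {i : Fin a | ∃ j : Fin b, Nonempty (Vf i ≃ₗ[R] Wf j)}, Vf i := by
  subst hV hW
  have : IsSemisimpleModule R ↥(⨆ j, Wf j) := by
    have := isSemisimpleModule_biSup_of_isSemisimpleModule_submodule
      (s := Set.univ) (p := Wf) fun j _ ↦ inferInstance
    rwa [iSup_univ] at this
  have : IsSemisimpleModule R ↥((⨆ i, Vf i) ⊓ ⨆ j, Wf j) :=
    .of_injective _ (Submodule.inclusion_injective inf_le_right)
  refine (Submodule.sSup_simples_le _).ge.trans (sSup_le ?_)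
  rintro S ⟨hS, hSle⟩
  obtain ⟨j, ⟨eW⟩⟩ := S.exists_linearEquiv_of_le_iSup Wf (hSle.trans inf_le_right)
  exact (S.le_iSup_linearEquiv_of_le_iSup Vf (hSle.trans inf_le_left)).trans
    (iSup₂_mono' fun i ⟨eV⟩ ↦ ⟨i, ⟨j, ⟨eV.symm.trans eW⟩⟩, le_rfl⟩)

/-- Lemma 3 of the paper: if `V = V₁ ⊕ ⋯ ⊕ V_a` and
`W = W₁ ⊕ ⋯ ⊕ W_b` are submodules of an `R`-module `X` decomposed into simple
submodules, and `V ⊓ W` is a direct summand of `W`, then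
`V ⊓ W ⊆ ⊕_{i ∈ I} V_i` where `I = {i | ∃ j, V_i ≅ W_j}`. -/
theorem inf_le_iso_summands
    (R : Type*) [Ring R] (X : Type*) [AddCommGroup X] [Module R X]
    (V W : Submodule R X) (a b : ℕ)
    (Vf : Fin a → Submodule R X) (Wf : Fin b → Submodule R X)
    (hVsimple : ∀ i, IsSimpleModule R (Vf i))
    (hWsimple : ∀ j, IsSimpleModule R (Wf j))
    (hVindep : iSupIndep Vf) (hWindep : iSupIndep Wf)
    (hV : V = ⨆ i, Vf i) (hW : W = ⨆ j, Wf j)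
    (hsummand : ∃ U : Submodule R X, U ≤ W ∧ (V ⊓ W) ⊓ U = ⊥ ∧ (V ⊓ W) ⊔ U = W) :
    V ⊓ W ≤ ⨆ i ∈ {i : Fin a | ∃ j : Fin b, Nonempty (Vf i ≃ₗ[R] Wf j)}, Vf i :=
  inf_le_iso_summands_general R X V W a b Vf Wf hVsimple hWsimple hV hW
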